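/- arXiv:quant-ph/9906111 — 2 statements merged into one kernel-verified Lean document; each statement's English description precedes it below -/
import Mathlib

section
/- No classical algorithm can solve Deutsch's problem with a single query: there do not exist t ∈ ℤ/2ℤ and a function g : ℤ/2ℤ → ℤ/2ℤ such that for all c₀, c₁ ∈ ℤ/2ℤ, g(c₀ + c₁·t) = c₁. That is, it is impossible to determine c₁ = f(0) + f(1) from the value of f at any single point, where f(t) = c₀ + c₁·t. -/
/- The affine maps `s ↦ t + 0 * s` and `s ↦ 0 + 1 * s` agree at the query point `t`
but have slopes `0 ≠ 1`. -/
theorem not_exists_slope_decoder {R : Type*} [NonAssocSemiring R] [Nontrivial R] (t : R) :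
    ¬ ∃ g : R → R, ∀ c₀ c₁ : R, g (c₀ + c₁ * t) = c₁ := by
  rintro ⟨g, hg⟩
  have h₀ : g t = 0 := by simpa using hg t 0
  have h₁ : g t = 1 := by simpa using hg 0 1
  exact zero_ne_one (h₀.symm.trans h₁)

/-- No classical algorithm solves Deutsch's problem with a single query:
there is no query point `t` and postprocessing function `g` such that
`g(f(t)) = c₁` for every `f(t) = c₀ + c₁·t`. -/
theorem no_classical_one_query_deutsch :
    ¬ ∃ (t : ZMod 2) (g : ZMod 2 → ZMod 2),
        ∀ c₀ c₁ : ZMod 2, g (c₀ + c₁ * t) = c₁ := by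
  rintro ⟨t, hg⟩
  exact not_exists_slope_decoder t hg
end

section
/- Let F be a finite field with |F| ≥ 2n, let n ≥ 1, let x, y : Fin n → F be distinct coefficient vectors, and let p_x(T) = Σ_{i<n} x_i T^i, p_y(T) = Σ_{i<n} y_i T^i ∈ F[T]. Then for every k ≥ 1, the number of tuples (t₁, …, t_k) ∈ F^k such that p_x(t_i) = p_y(t_i) for all i ∈ {1, …, k} satisfies: (number of such tuples) · 2^k ≤ |F|^k. Equivalently, if t₁, …, t_k are chosen independently and uniformly at random from F, the probability that p_x and p_y agree at all k points is at most 2^{−k}. -/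
/-!
The difference `p_x - p_y` is a nonzero polynomial of degree `< n`, so the set `S` of points where
`p_x` and `p_y` agree has fewer than `n ≤ |F| / 2` elements. The agreeing `k`-tuples are exactly
`S^k`, and `|S|^k * 2^k ≤ |F|^k`.
-/

open Polynomial Finset

namespace Polynomial

theorem coeff_sum_fin_C_mul_X_pow {R : Type*} [Semiring R] {n : ℕ} (f : Fin n → R) (j : Fin n) :
    (∑ i : Fin n, C (f i) * X ^ (i : ℕ)).coeff j = f j := by
  simp [finsetSum_coeff, coeff_X_pow, Fin.val_inj]

theorem sum_fin_C_mul_X_pow_injective {R : Type*} [Semiring R] {n : ℕ} :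
    Function.Injective fun f : Fin n → R => ∑ i : Fin n, C (f i) * X ^ (i : ℕ) := by
  intro f g h
  funext j
  simpa only [coeff_sum_fin_C_mul_X_pow] using congrArg (coeff · j) h

theorem card_filter_eval_eq_lt {R : Type*} [CommRing R] [IsDomain R] [Fintype R] [DecidableEq R]
    {p q : R[X]} {n : ℕ} (hpq : p ≠ q) (hp : p.degree < n) (hq : q.degree < n) :
    #{t | p.eval t = q.eval t} < n := by
  have hsub : p - q ≠ 0 := sub_ne_zero.2 hpq
  calc #{t | p.eval t = q.eval t} ≤ (p - q).natDegree :=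
        card_le_degree_of_subset_roots fun t ht => by
          rw [mem_roots hsub, IsRoot, eval_sub, sub_eq_zero]
          exact (mem_filter.1 ht).2
    _ < n := (natDegree_lt_iff_degree_lt hsub).2 ((degree_sub_le p q).trans_lt (max_lt hp hq))

end Polynomial

theorem Finset.card_filter_forall_fin_eq_pow {α : Type*} [Fintype α] (P : α → Prop)
    [DecidablePred P] (k : ℕ) :
    #{t : Fin k → α | ∀ i, P (t i)} = #{a | P a} ^ k := by
  have hpi : ({t : Fin k → α | ∀ i, P (t i)} : Finset (Fin k → α)) =
      Fintype.piFinset fun _ => {a | P a} := by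
    ext t
    simp [Fintype.mem_piFinset]
  rw [hpi, Fintype.card_piFinset, prod_const, card_univ, Fintype.card_fin]

theorem equality_protocol_error_general {F : Type*} [Field F] [Fintype F] [DecidableEq F]
    (n : ℕ) (hF : 2 * n ≤ Fintype.card F)
    (x y : Fin n → F) (hxy : x ≠ y) (k : ℕ) :
    (Finset.univ.filter fun t : Fin k → F =>
        ∀ i : Fin k,
          (∑ j : Fin n, C (x j) * X ^ (j : ℕ)).eval (t i)
            = (∑ j : Fin n, C (y j) * X ^ (j : ℕ)).eval (t i)).card * 2 ^ k
      ≤ Fintype.card F ^ k := by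
  set px : F[X] := ∑ j : Fin n, C (x j) * X ^ (j : ℕ)
  set py : F[X] := ∑ j : Fin n, C (y j) * X ^ (j : ℕ)
  have hagree : #{t | px.eval t = py.eval t} < n :=
    card_filter_eval_eq_lt (sum_fin_C_mul_X_pow_injective.ne hxy)
      (degree_sum_fin_lt x) (degree_sum_fin_lt y)
  rw [card_filter_forall_fin_eq_pow (fun t => px.eval t = py.eval t), ← mul_pow]
  exact Nat.pow_le_pow_left (by omega) k

/-- Error bound for the probabilistic equality protocol: over a finite field `F`
with `|F| ≥ 2n`, for distinct coefficient vectors `x ≠ y` of length `n`, the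
number of `k`-tuples of evaluation points at which `p_x` and `p_y` agree at
every point is at most `|F|^k / 2^k`; i.e. the agreement probability for `k`
independent uniform points is at most `2^{−k}`. -/
theorem equality_protocol_error {F : Type*} [Field F] [Fintype F] [DecidableEq F]
    (n : ℕ) (hn : 1 ≤ n) (hF : 2 * n ≤ Fintype.card F)
    (x y : Fin n → F) (hxy : x ≠ y) (k : ℕ) (hk : 1 ≤ k) :
    (Finset.univ.filter fun t : Fin k → F =>
        ∀ i : Fin k,
          (∑ j : Fin n, C (x j) * X ^ (j : ℕ)).eval (t i)
            = (∑ j : Fin n, C (y j) * X ^ (j : ℕ)).eval (t i)).card * 2 ^ k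
      ≤ Fintype.card F ^ k :=
  equality_protocol_error_general n hF x y hxy k
end
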